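/- arXiv:1206.3744 — 4 statements merged into one kernel-verified Lean document; each statement's English description precedes it below -/
import Mathlib

section
/- Let F be a field, f(t) = t^n + c_{n-1}t^{n-1} + ... + c_0 a monic polynomial over F, and d_1,...,d_n elements of F with d_1 + ... + d_n = -c_{n-1}. Then there exists a sequence b_1,...,b_{n-1} in F such that f(t) is the characteristic polynomial of the n×n matrix A with diagonal entries A_{ii} = d_i, subdiagonal entries A_{i+1,i} = 1 for 1 ≤ i ≤ n-1, last column entries A_{i,n} = b_i for 1 ≤ i ≤ n-1, and all other entries zero. -/
/-!
Expanding `det (t - A)` along the first row gives `χ_A = (t - d₁) χ_{A'} - b₁`, where `A'` is the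
matrix of the same shape built from `d₂, …, dₙ` and `b₂, …, bₙ₋₁`. Dividing `f` by `t - d₁` gives
`f = (t - d₁) q + f(d₁)` with `q` monic of degree `n - 1` whose subleading coefficient is
`-(d₂ + ⋯ + dₙ)`; by induction `q = χ_{A'}` for suitable `b₂, …, bₙ₋₁`, and `b₁ = -f(d₁)`.
-/

open Polynomial

/-- The matrix with diagonal `d`, subdiagonal entries `1`, last column
entries `b` above the diagonal, and zeros elsewhere. -/
def matA {F : Type*} [Field F] (n : ℕ) (d : Fin n → F) (b : Fin (n - 1) → F) :
    Matrix (Fin n) (Fin n) F :=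
  Matrix.of fun i j =>
    if i = j then d i
    else if (i : ℕ) = (j : ℕ) + 1 then 1
    else if (j : ℕ) = n - 1 then (if h : (i : ℕ) < n - 1 then b ⟨i, h⟩ else 0)
    else 0

open Matrix

theorem Matrix.charmatrix_submatrix {R m n : Type*} [CommRing R] [DecidableEq m] [DecidableEq n]
    [Fintype m] [Fintype n] (M : Matrix n n R) {e : m → n} (he : Function.Injective e) :
    charmatrix (M.submatrix e e) = (charmatrix M).submatrix e e := by
  ext i j : 1
  obtain rfl | hij := eq_or_ne i j
  · simp
  · simp [charmatrix_apply_ne _ _ _ hij, charmatrix_apply_ne _ _ _ (he.ne hij)]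

theorem Polynomial.Monic.exists_eq_X_sub_C_mul_add_C {R : Type*} [CommRing R] [Nontrivial R]
    {f : R[X]} {m : ℕ} (hf : f.Monic) (hdeg : f.natDegree = m + 2) (a : R) :
    ∃ q : R[X], q.Monic ∧ q.natDegree = m + 1 ∧ q.coeff m = f.coeff (m + 1) + a ∧
      f = (X - C a) * q + C (f.eval a) := by
  set q := f /ₘ (X - C a)
  have hfq : f = (X - C a) * q + C (f.eval a) := by
    rw [← modByMonic_X_sub_C_eq_C_eval, add_comm, modByMonic_add_div]
  have hq : q.Monic := by
    rw [Monic, leadingCoeff_divByMonic_of_monic (monic_X_sub_C a), hf.leadingCoeff]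
    rw [degree_X_sub_C, degree_eq_natDegree hf.ne_zero, hdeg]
    exact_mod_cast (by omega : 1 ≤ m + 2)
  have hqdeg : q.natDegree = m + 1 := by
    rw [natDegree_divByMonic _ (monic_X_sub_C a), hdeg, natDegree_X_sub_C]
    rfl
  have hlead : q.coeff (m + 1) = 1 := hqdeg ▸ hq.coeff_natDegree
  refine ⟨q, hq, hqdeg, ?_, hfq⟩
  have hcoeff : f.coeff (m + 1) = q.coeff m - a := by
    rw [hfq, coeff_add, coeff_X_sub_C_mul, coeff_C, if_neg m.succ_ne_zero, hlead]
    ring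
  rw [hcoeff]
  ring

theorem coeff_sum_fin_C_mul_X_pow {R : Type*} [Semiring R] {n : ℕ} (c : Fin n → R)
    (i : Fin n) : (∑ j : Fin n, C (c j) * X ^ (j : ℕ)).coeff i = c i := by
  simp [Fin.val_inj]

section
variable {F : Type*} [Field F]

theorem matA_submatrix_succ (m : ℕ) (d : Fin (m + 2) → F) (b₀ : F) (b : Fin m → F) :
    (matA (m + 2) d (Fin.cons b₀ b : Fin (m + 1) → F)).submatrix Fin.succ Fin.succ =
      matA (m + 1) (Fin.tail d) b := by
  ext i j
  simp only [matA, submatrix_apply, of_apply, Fin.succ_inj, Fin.val_succ, Fin.tail]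
  split_ifs <;> first | rfl | omega

theorem matA_zero_apply_of_ne {m : ℕ} (d : Fin (m + 2) → F) (b : Fin (m + 1) → F)
    {j : Fin (m + 2)} (h₀ : j ≠ 0) (hlast : j ≠ Fin.last (m + 1)) : matA (m + 2) d b 0 j = 0 := by
  have hj : (j : ℕ) ≠ m + 1 := by
    simpa [Fin.ext_iff] using hlast
  simp [matA, h₀.symm, hj]

theorem matA_zero_last {m : ℕ} (d : Fin (m + 2) → F) (b : Fin (m + 1) → F) :
    matA (m + 2) d b 0 (Fin.last (m + 1)) = b 0 := by
  simp [matA, Fin.ext_iff]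

theorem det_charmatrix_matA_submatrix_succ_castSucc {m : ℕ} (d : Fin (m + 2) → F)
    (b : Fin (m + 1) → F) :
    ((charmatrix (matA (m + 2) d b)).submatrix Fin.succ Fin.castSucc).det = (-1) ^ (m + 1) := by
  rw [det_of_isUpperTriangular]
  · have hdiag (i : Fin (m + 1)) : charmatrix (matA (m + 2) d b) i.succ i.castSucc = -1 := by
      rw [charmatrix_apply_ne _ _ _ (by simp [Fin.ext_iff])]
      simp [matA, Fin.ext_iff]
    simp [hdiag]
  · intro i j hji
    have : (j : ℕ) < i := hji
    rw [submatrix_apply, charmatrix_apply_ne _ _ _ (by simp [Fin.ext_iff]; omega)]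
    simp only [matA, of_apply, Fin.ext_iff, Fin.val_succ, Fin.val_castSucc]
    split_ifs <;> first | omega | simp

theorem charpoly_matA_one (d : Fin 1 → F) (b : Fin 0 → F) :
    (matA 1 d b).charpoly = X - C (d 0) := by
  simp [Matrix.charpoly, matA]

theorem charpoly_matA_cons (m : ℕ) (d : Fin (m + 2) → F) (b₀ : F) (b : Fin m → F) :
    (matA (m + 2) d (Fin.cons b₀ b : Fin (m + 1) → F)).charpoly =
      (X - C (d 0)) * (matA (m + 1) (Fin.tail d) b).charpoly - C b₀ := by
  have hfirst : charmatrix (matA (m + 2) d (Fin.cons b₀ b : Fin (m + 1) → F)) 0 0 =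
      X - C (d 0) := by
    simp [matA]
  have hlast : charmatrix (matA (m + 2) d (Fin.cons b₀ b : Fin (m + 1) → F)) 0
      (Fin.last (m + 1)) = -C b₀ := by
    rw [charmatrix_apply_ne _ _ _ (by simp [Fin.ext_iff]), matA_zero_last]
    rfl
  have hmid (j : Fin (m + 1)) (hj : j ≠ Fin.last m) :
      charmatrix (matA (m + 2) d (Fin.cons b₀ b : Fin (m + 1) → F)) 0 j.succ = 0 := by
    rw [charmatrix_apply_ne _ _ _ (Fin.succ_ne_zero j).symm,
      matA_zero_apply_of_ne _ _ (Fin.succ_ne_zero j) (by simpa using hj), map_zero, neg_zero]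
  have hsign : ((-1 : F[X]) ^ (m + 1)) * (-1) ^ (m + 1) = 1 := by
    rw [← mul_pow, neg_one_mul, neg_neg, one_pow]
  rw [Matrix.charpoly, det_succ_row_zero, Fin.sum_univ_succ,
    Finset.sum_eq_single (Fin.last m) (fun j _ hj => by rw [hmid j hj, mul_zero, zero_mul])
      (by simp), Fin.succAbove_zero, Fin.succ_last, Fin.succAbove_last, hfirst, hlast,
    ← charmatrix_submatrix _ (Fin.succ_injective _), matA_submatrix_succ,
    det_charmatrix_matA_submatrix_succ_castSucc, Matrix.charpoly]
  simp only [Fin.val_zero, Fin.val_last, Nat.succ_eq_add_one, pow_zero, one_mul]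
  linear_combination (-C b₀) * hsign

theorem exists_charpoly_matA_eq (m : ℕ) (d : Fin (m + 1) → F) {f : F[X]} (hf : f.Monic)
    (hdeg : f.natDegree = m + 1) (hcoeff : f.coeff m = -∑ i, d i) :
    ∃ b : Fin m → F, (matA (m + 1) d b).charpoly = f := by
  induction m generalizing f with
  | zero =>
    refine ⟨Fin.elim0, ?_⟩
    rw [charpoly_matA_one, hf.eq_X_add_C hdeg, hcoeff]
    simp [sub_eq_add_neg]
  | succ m ih =>
    obtain ⟨q, hq, hqdeg, hqcoeff, hfq⟩ := hf.exists_eq_X_sub_C_mul_add_C hdeg (d 0)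
    have hqcoeff' : q.coeff m = -∑ i, Fin.tail d i := by
      rw [hqcoeff, hcoeff, Fin.sum_univ_succ]
      simp [Fin.tail]
    obtain ⟨b, hb⟩ := ih (Fin.tail d) hq hqdeg hqcoeff'
    refine ⟨Fin.cons (-f.eval (d 0)) b, ?_⟩
    rw [charpoly_matA_cons, hb, map_neg, sub_neg_eq_add]
    exact hfq.symm

end

theorem stmt0 {F : Type*} [Field F] (n : ℕ) (hn : 1 ≤ n)
    (c : Fin n → F) (d : Fin n → F)
    (hd : ∑ i, d i = -c ⟨n - 1, by omega⟩) :
    ∃ b : Fin (n - 1) → F,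
      (matA n d b).charpoly = X ^ n + ∑ i : Fin n, C (c i) * X ^ (i : ℕ) := by
  obtain ⟨m, rfl⟩ : ∃ m, n = m + 1 := ⟨n - 1, by omega⟩
  have hlow := degree_sum_fin_lt c
  refine exists_charpoly_matA_eq m d (monic_X_pow_add hlow) ?_ ?_
  · rw [natDegree_add_eq_left_of_degree_lt (by rwa [degree_X_pow]), natDegree_X_pow]
  · rw [coeff_add, coeff_X_pow, if_neg m.lt_add_one.ne, zero_add, hd, neg_neg]
    exact coeff_sum_fin_C_mul_X_pow c (Fin.last m)
end

section
/- Let F be a field, n ≥ 1, and let A be the n×n matrix over F whose diagonal is (d_1,...,d_n), whose subdiagonal entries equal 1, whose last column above the diagonal is (b_1,...,b_{n-1}), and zero elsewhere. Fix k with 1 ≤ k ≤ n-1. If S ⊆ {1,...,n} with |S| ≤ n-k+1 and the variable b_k occurs in the principal minor det(A_S) (i.e., det(A_S), viewed as a polynomial in b_1,...,b_{n-1}, depends on b_k), then S = {k, k+1, ..., n}. -/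
open MvPolynomial

/-- The matrix over `F[b_1,…,b_{n-1}]` with diagonal `d` (as constants),
subdiagonal entries `1`, last column entries the variables `b_i` above the
diagonal, and zeros elsewhere. -/
noncomputable def matAmv {F : Type*} [Field F] (n : ℕ) (d : Fin n → F) :
    Matrix (Fin n) (Fin n) (MvPolynomial (Fin (n - 1)) F) :=
  Matrix.of fun i j =>
    if i = j then C (d i)
    else if (i : ℕ) = (j : ℕ) + 1 then 1
    else if (j : ℕ) = n - 1 then (if h : (i : ℕ) < n - 1 then X ⟨i, h⟩ else 0)
    else 0

/-!
Expand the determinant: some permutation `σ` of `S` has all factors `A (σ i) i` nonzero and one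
of them contains `b_k`, so `σ` sends the last index to `k`. Off the last column the nonzero entries
are diagonal or subdiagonal, hence every point moved by `σ` below the last index is sent to its
successor. Starting from the moved point `k`, the moved points run through `k, k+1, …, n-1`, which
all lie in `S`, and the cardinality bound forces equality.
-/

theorem Equiv.Perm.exists_moved_of_succ {α : Type*} (σ : Equiv.Perm α) (v : α → ℕ) (N : ℕ)
    (hstep : ∀ a, σ a ≠ a → v a < N → v (σ a) = v a + 1) {e : α} (he : σ e ≠ e) :
    ∀ m, v e ≤ m → m ≤ N → ∃ a, σ a ≠ a ∧ v a = m := by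
  intro m hem
  induction m, hem using Nat.le_induction with
  | base => exact fun _ => ⟨e, he, rfl⟩
  | succ m _ ih =>
    intro hmN
    obtain ⟨a, ha, rfl⟩ := ih (by omega)
    exact ⟨σ a, fun h => ha (σ.injective h), hstep a ha (by omega)⟩

theorem MvPolynomial.exists_perm_mem_vars_of_mem_vars_det {ι κ R : Type*} [Fintype ι]
    [DecidableEq ι] [DecidableEq κ] [CommRing R] {M : Matrix ι ι (MvPolynomial κ R)} {s : κ}
    (h : s ∈ M.det.vars) :
    ∃ τ : Equiv.Perm ι, (∀ i, M (τ i) i ≠ 0) ∧ ∃ i, s ∈ (M (τ i) i).vars := by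
  rw [Matrix.det_apply] at h
  obtain ⟨τ, -, hτ⟩ := Finset.mem_biUnion.mp (vars_sum_subset _ _ h)
  have hprod : s ∈ (∏ i, M (τ i) i).vars := by
    rcases Int.units_eq_one_or (Equiv.Perm.sign τ) with hs | hs <;>
      simpa [hs, vars_neg] using hτ
  refine ⟨τ, fun i hi => ?_, ?_⟩
  · rw [Finset.prod_eq_zero (f := fun j => M (τ j) j) (Finset.mem_univ i) hi, vars_0] at hprod
    exact Finset.notMem_empty s hprod
  · obtain ⟨i, -, hi⟩ := Finset.mem_biUnion.mp (vars_prod _ hprod)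
    exact ⟨i, hi⟩

section matAmv

variable {F : Type*} [Field F] {n : ℕ} {d : Fin n → F}

theorem matAmv_apply_eq_zero {r c : Fin n} (hrc : r ≠ c) (hsub : (r : ℕ) ≠ c + 1)
    (hlast : (c : ℕ) ≠ n - 1) : matAmv n d r c = 0 := by
  simp [matAmv, hrc, hsub, hlast]

theorem eq_of_mem_vars_matAmv_apply {k : Fin (n - 1)} {r c : Fin n}
    (h : k ∈ (matAmv n d r c).vars) : (r : ℕ) = k ∧ (c : ℕ) = n - 1 := by
  simp only [matAmv, Matrix.of_apply] at h
  split_ifs at h with _ _ hc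
  · simp at h
  · simp at h
  · rw [vars_X, Finset.mem_singleton] at h
    exact ⟨by rw [h], hc⟩
  all_goals simp at h

end matAmv

theorem stmt2_general {F : Type*} [Field F] (n : ℕ) (d : Fin n → F)
    (k : Fin (n - 1)) (S : Finset (Fin n))
    (hcard : S.card ≤ n - (k : ℕ))
    (hvar : k ∈ (Matrix.det ((matAmv n d).submatrix
        (fun i : S => (i : Fin n)) (fun j : S => (j : Fin n)))).vars) :
    S = Finset.univ.filter (fun i : Fin n => (k : ℕ) ≤ (i : ℕ)) := by
  classical
  obtain ⟨σ, hnz, i₀, hi₀⟩ := exists_perm_mem_vars_of_mem_vars_det hvar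
  obtain ⟨hrow, hcol⟩ := eq_of_mem_vars_matAmv_apply hi₀
  dsimp only at hrow hcol
  have hk : (k : ℕ) < n - 1 := k.isLt
  have hstep : ∀ a : S, σ a ≠ a → ((a : Fin n) : ℕ) < n - 1 →
      ((σ a : Fin n) : ℕ) = (a : Fin n) + 1 := fun a hmoved hlt => by
    by_contra hsub
    exact hnz a (matAmv_apply_eq_zero (fun h => hmoved (Subtype.ext h)) hsub hlt.ne)
  have hmoved : σ (σ i₀) ≠ σ i₀ := fun h => by
    have := congrArg (fun a : S => ((a : Fin n) : ℕ)) (σ.injective h)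
    omega
  have hsub : Finset.univ.filter (fun i : Fin n => (k : ℕ) ≤ (i : ℕ)) ⊆ S := by
    intro i hi
    obtain ⟨a, -, ha⟩ := σ.exists_moved_of_succ (fun a => ((a : Fin n) : ℕ)) (n - 1) hstep
      hmoved i (by simpa [hrow] using hi) (by omega)
    rw [show i = a from Fin.ext ha.symm]
    exact a.2
  have hcard_filter : (Finset.univ.filter (fun i : Fin n => (k : ℕ) ≤ (i : ℕ))).card = n - k := by
    rw [show Finset.univ.filter (fun i : Fin n => (k : ℕ) ≤ (i : ℕ)) = Finset.Ici ⟨k, by omega⟩ by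
      ext; simp [Fin.le_def], Fin.card_Ici]
  exact (Finset.eq_of_subset_of_card_le hsub (hcard_filter ▸ hcard)).symm

theorem stmt2 {F : Type*} [Field F] (n : ℕ) (hn : 1 ≤ n) (d : Fin n → F)
    (k : Fin (n - 1)) (S : Finset (Fin n))
    (hcard : S.card ≤ n - (k : ℕ))
    (hvar : k ∈ (Matrix.det ((matAmv n d).submatrix
        (fun i : S => (i : Fin n)) (fun j : S => (j : Fin n)))).vars) :
    S = Finset.univ.filter (fun i : Fin n => (k : ℕ) ≤ (i : ℕ)) :=
  stmt2_general n d k S hcard hvar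
end

section
/- Let F be a field, n ≥ 1, and let A be the n×n matrix over the polynomial ring F[b_1,...,b_{n-1}] with diagonal (d_1,...,d_n) (elements of F), subdiagonal entries 1, last column above the diagonal (b_1,...,b_{n-1}), and zero elsewhere. For each k with 1 ≤ k ≤ n-1, the sum of all principal minors of A of size n-k+1 equals (-1)^{n-k} b_k + g_k, where g_k is a polynomial depending only on b_{k+1},...,b_{n-1}. -/
/-!
Only the last column of `matAmv n d` involves the variables, and only linearly, so expanding a
principal minor along that column shows that the coefficient of `b_q` in the minor on `S` is a
cofactor, at position `(q, n - 1)`, of the constant lower bidiagonal matrix. If some index strictly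
between `q` and `n - 1` is missing from `S`, the matrix computing this cofactor is block triangular
with a zero row in one block, so the cofactor vanishes; if `S = [q, n - 1]` it is
`(-1) ^ (n - 1 - q)`. A set of size `n - k` containing `q ≤ k` and `n - 1` with no gap between
them is `[k, n - 1]`, so among `b_0, …, b_k` only `b_k` survives in the sum, with sign
`(-1) ^ (n - 1 - k)`.
-/

open MvPolynomial

open Matrix Finset

abbrev Matrix.principalSubmatrix {α ι : Type*} (M : Matrix ι ι α) (S : Finset ι) :
    Matrix S S α :=
  M.submatrix (↑) (↑)

@[simp]
theorem Matrix.principalSubmatrix_apply {α ι : Type*} (M : Matrix ι ι α) (S : Finset ι)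
    (i j : S) : M.principalSubmatrix S i j = M i j :=
  rfl

section Determinants

variable {R ι : Type*} [CommRing R] [Fintype ι] [DecidableEq ι]

theorem Matrix.det_updateCol_self_add (M : Matrix ι ι R) (j : ι) (v : ι → R) :
    (M.updateCol j fun i => M i j + v i).det = M.det + ∑ i, M.adjugate j i * v i := by
  rw [show (fun i => M i j + v i) = (fun i => M i j) + v from rfl, det_updateCol_add,
    updateCol_eq_self, ← cramer_apply, cramer_eq_adjugate_mulVec]
  rfl

theorem Matrix.det_eq_neg_one_pow_of_row_zero {m : ℕ}
    (B : Matrix (Fin (m + 1)) (Fin (m + 1)) R) (h0 : B 0 = Pi.single (Fin.last m) 1)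
    (hdiag : ∀ i : Fin m, B i.succ i.castSucc = 1)
    (hupper : ∀ i j : Fin m, j < i → B i.succ j.castSucc = 0) : B.det = (-1) ^ m := by
  have hminor : (B.submatrix Fin.succ Fin.castSucc).det = 1 := by
    rw [det_of_isUpperTriangular (M := B.submatrix Fin.succ Fin.castSucc) hupper]
    exact prod_eq_one fun i _ => hdiag i
  rw [det_succ_row_zero, Fintype.sum_eq_single (Fin.last m), h0, Fin.succAbove_last, hminor]
  · simp
  · intro j hj
    simp [h0, hj]

end Determinants

def lowerBidiag {R : Type*} [CommRing R] {n : ℕ} (d : Fin n → R) : Matrix (Fin n) (Fin n) R :=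
  of fun i j => if i = j then d i else if (i : ℕ) = j + 1 then 1 else 0

def Fin.equivIcc {n : ℕ} {p c : Fin n} (hpc : p ≤ c) : Fin (c - p + 1) ≃ Icc p c where
  toFun i := ⟨⟨p + i, by omega⟩, by simp only [mem_Icc, Fin.le_def]; omega⟩
  invFun x := ⟨x.1 - p, by have := (mem_Icc.1 x.2).2; rw [Fin.le_def] at this; omega⟩
  left_inv i := by ext; simp
  right_inv x := by ext; have := (mem_Icc.1 x.2).1; rw [Fin.le_def] at this; simp; omega

section LowerBidiag

variable {R : Type*} [CommRing R] {n : ℕ} (d : Fin n → R)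

theorem lowerBidiag_eq_zero_of_lt {i j : Fin n} (h : j < i) (h' : (i : ℕ) ≠ j + 1) :
    lowerBidiag d i j = 0 := by
  simp [lowerBidiag, h.ne', h']

theorem adjugate_principalSubmatrix_lowerBidiag_eq_zero {S : Finset (Fin n)} {p c : Fin n}
    (hp : p ∈ S) (hc : c ∈ S) (hS : ¬Icc p c ⊆ S) :
    adjugate ((lowerBidiag d).principalSubmatrix S) ⟨c, hc⟩ ⟨p, hp⟩ = 0 := by
  obtain ⟨x, hx', hx⟩ := not_subset.1 hS
  obtain ⟨hpx, hxc⟩ := mem_Icc.1 hx'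
  replace hpx : p < x := lt_of_le_of_ne hpx fun h => hx (h ▸ hp)
  replace hxc : x < c := lt_of_le_of_ne hxc fun h => hx (h ▸ hc)
  rw [adjugate_apply, twoBlockTriangular_det _ fun i : S => (i : Fin n) < x]
  · refine mul_eq_zero_of_left (det_eq_zero_of_row_eq_zero ⟨⟨p, hp⟩, hpx⟩ fun j => ?_) _
    have : (j : S) ≠ ⟨c, hc⟩ := fun h => (j.2.trans hxc).ne (congrArg Subtype.val h)
    simp [toSquareBlockProp, toBlock, this]
  · intro i hi j hj
    have hip : i ≠ ⟨p, hp⟩ := by rintro rfl; exact hi hpx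
    have hxi : x < i := lt_of_le_of_ne (not_lt.1 hi) fun h => hx (h ▸ i.2)
    rw [updateRow_ne hip, principalSubmatrix_apply]
    refine lowerBidiag_eq_zero_of_lt d (hj.trans hxi) ?_
    rw [Fin.lt_def] at hj hxi
    omega

theorem adjugate_principalSubmatrix_lowerBidiag_Icc {p c : Fin n} (hpc : p ≤ c) :
    adjugate ((lowerBidiag d).principalSubmatrix (Icc p c))
      ⟨c, right_mem_Icc.2 hpc⟩ ⟨p, left_mem_Icc.2 hpc⟩ = (-1) ^ (c - p : ℕ) := by
  set e := Fin.equivIcc hpc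
  rw [adjugate_apply, ← det_submatrix_equiv_self e]
  apply det_eq_neg_one_pow_of_row_zero
  · have he0 : e 0 = ⟨p, left_mem_Icc.2 hpc⟩ := by ext; simp [e, Fin.equivIcc]
    ext j
    rw [submatrix_apply, he0, updateRow_self, Pi.single_apply, Pi.single_apply]
    congr 1
    simp [e, Fin.equivIcc, Fin.ext_iff]
    omega
  · intro i
    simp [e, Fin.equivIcc, lowerBidiag, Fin.ext_iff, add_assoc]
  · intro i j hij
    rw [Fin.lt_def] at hij
    rw [submatrix_apply, updateRow_ne (by simp [e, Fin.equivIcc, Fin.ext_iff])]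
    apply lowerBidiag_eq_zero_of_lt <;> simp [e, Fin.equivIcc, Fin.lt_def] <;> omega

end LowerBidiag

section MatAmv

variable {F : Type*} [Field F] {n : ℕ} (d : Fin n → F)

noncomputable def varColumn (n : ℕ) (i : Fin n) : MvPolynomial (Fin (n - 1)) F :=
  if h : (i : ℕ) < n - 1 then X ⟨i, h⟩ else 0

theorem varColumn_of_lt {i : Fin n} (h : (i : ℕ) < n - 1) :
    varColumn (F := F) n i = X ⟨i, h⟩ :=
  dif_pos h

theorem varColumn_mem_supported {k : Fin (n - 1)} {q : Fin n} (hq : (k : ℕ) < q) :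
    varColumn n q ∈ supported F {i | k < i} := by
  unfold varColumn
  split_ifs with h
  · exact X_mem_supported.2 (Fin.lt_def.2 hq)
  · exact zero_mem _

theorem matAmv_apply (i j : Fin n) :
    matAmv n d i j = C (lowerBidiag d i j) + if (j : ℕ) = n - 1 then varColumn n i else 0 := by
  have := i.2
  by_cases hij : i = j
  · subst hij
    simp [matAmv, lowerBidiag, varColumn]
    omega
  · simp only [matAmv, lowerBidiag, varColumn, of_apply, if_neg hij]
    split_ifs <;> simp; omega

theorem det_principalSubmatrix_matAmv_of_notMem {S : Finset (Fin n)} {c : Fin n}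
    (hcn : (c : ℕ) = n - 1) (hc : c ∉ S) :
    ((matAmv n d).principalSubmatrix S).det = C ((lowerBidiag d).principalSubmatrix S).det := by
  rw [RingHom.map_det]
  congr 1
  ext i j
  have : (j : ℕ) ≠ n - 1 := fun h => hc (Fin.ext (h.trans hcn.symm) ▸ j.2)
  simp [matAmv_apply, this]

theorem det_principalSubmatrix_matAmv_of_mem {S : Finset (Fin n)} {c : Fin n}
    (hcn : (c : ℕ) = n - 1) (hc : c ∈ S) :
    ((matAmv n d).principalSubmatrix S).det =
      C ((lowerBidiag d).principalSubmatrix S).det +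
        ∑ q : S, C (adjugate ((lowerBidiag d).principalSubmatrix S) ⟨c, hc⟩ q) *
          varColumn n q := by
  set N := (lowerBidiag d).principalSubmatrix S
  have hsplit : (matAmv n d).principalSubmatrix S =
      (C.mapMatrix N).updateCol ⟨c, hc⟩
        fun q => C.mapMatrix N q ⟨c, hc⟩ + varColumn n q := by
    ext i j
    by_cases hj : j = ⟨c, hc⟩
    · subst hj
      simp [N, matAmv_apply, hcn]
    · have : (j : ℕ) ≠ n - 1 := fun h => hj (Subtype.ext (Fin.ext (h.trans hcn.symm)))
      simp [N, matAmv_apply, this, updateCol_ne hj]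
  rw [hsplit, det_updateCol_self_add, RingHom.map_det, ← RingHom.map_adjugate]
  rfl

theorem det_principalSubmatrix_matAmv_sub_mem_supported (k : Fin (n - 1)) {c k' : Fin n}
    (hcn : (c : ℕ) = n - 1) (hk' : (k' : ℕ) = k) {S : Finset (Fin n)} (hS : #S = n - k) :
    ((matAmv n d).principalSubmatrix S).det -
        (if S = Icc k' c then (-1) ^ (n - 1 - (k : ℕ)) * X k else 0) ∈
      supported F {i | k < i} := by
  have hkc : k' ≤ c := Fin.le_def.2 (by omega)
  by_cases hc : c ∈ S
  swap
  · rw [det_principalSubmatrix_matAmv_of_notMem d hcn hc,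
      if_neg fun h : S = Icc k' c => hc (h ▸ right_mem_Icc.2 hkc), sub_zero]
    exact Subalgebra.algebraMap_mem _ _
  rw [det_principalSubmatrix_matAmv_of_mem d hcn hc]
  by_cases hSk : S = Icc k' c
  · subst hSk
    have hk'S : k' ∈ Icc k' c := left_mem_Icc.2 hkc
    rw [if_pos rfl, ← add_sum_erase _ _ (mem_univ ⟨k', hk'S⟩),
      adjugate_principalSubmatrix_lowerBidiag_Icc d hkc]
    have hlead : C ((-1 : F) ^ ((c : ℕ) - k')) * varColumn n k' =
        (-1) ^ (n - 1 - (k : ℕ)) * X k := by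
      rw [varColumn_of_lt (hk' ▸ k.2), congrArg X (Fin.ext hk' : (⟨k', _⟩ : Fin (n - 1)) = k),
        hcn, hk', map_pow, map_neg, map_one]
    dsimp only
    rw [hlead, add_left_comm, add_sub_cancel_left]
    refine add_mem (Subalgebra.algebraMap_mem _ _) (sum_mem fun q hq => ?_)
    refine Subalgebra.mul_mem _ (Subalgebra.algebraMap_mem _ _) (varColumn_mem_supported ?_)
    have hqk : k' < q :=
      lt_of_le_of_ne (mem_Icc.1 q.2).1 fun h => ne_of_mem_erase hq (Subtype.ext h.symm)
    exact hk' ▸ Fin.lt_def.1 hqk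
  · rw [if_neg hSk, sub_zero]
    refine add_mem (Subalgebra.algebraMap_mem _ _) (sum_mem fun q _ => ?_)
    rcases lt_or_ge (k : ℕ) q with hq | hq
    · exact Subalgebra.mul_mem _ (Subalgebra.algebraMap_mem _ _) (varColumn_mem_supported hq)
    rw [adjugate_principalSubmatrix_lowerBidiag_eq_zero d q.2 hc, map_zero, zero_mul]
    · exact zero_mem _
    intro hsub
    have hqk : (q : Fin n) ≤ k' := Fin.le_def.2 (hk' ▸ hq)
    refine hSk (eq_of_subset_of_card_le ((Icc_subset_Icc_left hqk).trans hsub) ?_).symm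
    rw [hS, Fin.card_Icc, hcn, hk']
    omega

end MatAmv

/-- Here `k` is zero-indexed: the minors have size `n - k`, which is `n - (k + 1) + 1` in the
one-indexed notation of the informal statement. -/
theorem stmt3_general {F : Type*} [Field F] (n : ℕ) (d : Fin n → F)
    (k : Fin (n - 1)) :
    ∃ g : MvPolynomial (Fin (n - 1)) F,
      (∀ j : Fin (n - 1), (j : ℕ) ≤ (k : ℕ) → j ∉ g.vars) ∧
      ∑ S ∈ Finset.univ.powerset.filter (fun S : Finset (Fin n) => S.card = n - (k : ℕ)),
          Matrix.det ((matAmv n d).submatrix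
            (fun i : S => (i : Fin n)) (fun j : S => (j : Fin n)))
        = (-1) ^ (n - 1 - (k : ℕ)) * X k + g := by
  have hk := k.2
  set c : Fin n := ⟨n - 1, by omega⟩
  set k' : Fin n := ⟨k, by omega⟩
  set minors := univ.powerset.filter fun S : Finset (Fin n) => #S = n - k
  have hIcc : Icc k' c ∈ minors :=
    mem_filter.2 ⟨mem_powerset.2 (subset_univ _), by rw [Fin.card_Icc]; simp [k', c]; omega⟩
  set g := ∑ S ∈ minors, (((matAmv n d).principalSubmatrix S).det -
    if S = Icc k' c then (-1) ^ (n - 1 - (k : ℕ)) * X k else 0) with hg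
  have hg_mem : g ∈ supported F {i | k < i} := sum_mem fun S hS =>
    det_principalSubmatrix_matAmv_sub_mem_supported d k rfl rfl (mem_filter.1 hS).2
  refine ⟨g, fun j hjk hj => not_lt.2 hjk (Fin.lt_def.1 (mem_supported.1 hg_mem hj)), ?_⟩
  rw [hg, sum_sub_distrib, sum_ite_eq' _ _ _, if_pos hIcc, add_sub_cancel]

/-- The sum of all principal minors of size `n - k` (for `k` zero-indexed,
this is size `n - (k+1) + 1` in one-indexed notation) is
`(-1)^(n-k-1) * b_k` plus a polynomial in `b_{k+1}, …, b_{n-1}` only. -/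
theorem stmt3 {F : Type*} [Field F] (n : ℕ) (hn : 1 ≤ n) (d : Fin n → F)
    (k : Fin (n - 1)) :
    ∃ g : MvPolynomial (Fin (n - 1)) F,
      (∀ j : Fin (n - 1), (j : ℕ) ≤ (k : ℕ) → j ∉ g.vars) ∧
      ∑ S ∈ Finset.univ.powerset.filter (fun S : Finset (Fin n) => S.card = n - (k : ℕ)),
          Matrix.det ((matAmv n d).submatrix
            (fun i : S => (i : Fin n)) (fun j : S => (j : Fin n)))
        = (-1) ^ (n - 1 - (k : ℕ)) * X k + g :=
  stmt3_general n d k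
end

section
/- (Mirsky's theorem) Let λ_1,...,λ_n and d_1,...,d_n be complex numbers with λ_1 + ... + λ_n = d_1 + ... + d_n. Then there exists an n×n complex matrix A with diagonal entries A_{ii} = d_i for all i and with characteristic polynomial ∏_{i=1}^n (t - λ_i). -/
/-!
Let `p = ∏ (X - λᵢ)` and `Nⱼ = (X - d₀) ⋯ (X - dⱼ₋₁)`. The classes of `N₀, …, Nₙ₋₁` form a basis
of `K[X]/(p)`, and the matrix `A` of multiplication by `X` in this basis has characteristic
polynomial `p`. Since `X Nⱼ = Nⱼ₊₁ + dⱼ Nⱼ`, the diagonal entry `Aⱼⱼ` is `dⱼ` for `j < n - 1`; the last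
one is then forced by `trace A = ∑ λᵢ = ∑ dᵢ`.
-/

open Polynomial Module Lagrange

theorem Fintype.apply_eq_of_sum_eq_of_forall_ne {ι M : Type*} [Fintype ι] [DecidableEq ι]
    [AddCancelCommMonoid M] {f g : ι → M} (hsum : ∑ j, f j = ∑ j, g j) (i : ι)
    (hne : ∀ j ≠ i, f j = g j) : f i = g i := by
  rw [Fintype.sum_eq_add_sum_compl i f, Fintype.sum_eq_add_sum_compl i g,
    Finset.sum_congr rfl fun j hj => hne j (by simpa using hj)] at hsum
  exact add_right_cancel hsum

namespace Polynomial

variable {R : Type*} [CommRing R]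

theorem nodal_range_succ (d : ℕ → R) (j : ℕ) :
    nodal (Finset.range (j + 1)) d = (X - C (d j)) * nodal (Finset.range j) d := by
  rw [Finset.range_add_one, nodal_insert_eq_nodal Finset.notMem_range_self]

variable [Nontrivial R]

noncomputable def newtonSequence (d : ℕ → R) : Sequence R :=
  ⟨fun j => nodal (Finset.range j) d, fun j => by rw [degree_nodal, Finset.card_range]⟩

theorem span_nodal_range_eq_degreeLT (d : ℕ → R) (n : ℕ) :
    Submodule.span R ((fun j => nodal (Finset.range j) d) '' Set.Iio n) = degreeLT R n :=
  (newtonSequence d).span_degreeLT fun i _ =>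
    (nodal_monic (s := Finset.range i) (v := d)).leadingCoeff.symm ▸ isUnit_one

end Polynomial

namespace AdjoinRoot

section CommRing

variable {R : Type*} [CommRing R] [Nontrivial R] {p : R[X]} {n : ℕ}

theorem span_mk_nodal_range (hp : p.Monic) (hn : p.natDegree = n) (d : ℕ → R) :
    Submodule.span R (Set.range fun j : Fin n => mk p (nodal (Finset.range j) d)) = ⊤ := by
  have hrange : (Set.range fun j : Fin n => mk p (nodal (Finset.range j) d)) =
      (mkₐ p).toLinearMap '' ((fun j => nodal (Finset.range j) d) '' Set.Iio n) := by
    rw [← Fin.range_val, ← Set.range_comp, ← Set.range_comp]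
    rfl
  rw [hrange, Submodule.span_image, span_nodal_range_eq_degreeLT, eq_top_iff]
  intro y _
  refine ⟨modByMonicHom hp y, ?_, mk_leftInverse hp y⟩
  induction y using AdjoinRoot.induction_on with
  | ih q =>
    rw [SetLike.mem_coe, modByMonicHom_mk, mem_degreeLT, ← hn, ← degree_eq_natDegree hp.ne_zero]
    exact degree_modByMonic_lt q hp

end CommRing

variable {K : Type*} [Field K] {p : K[X]} {n : ℕ}

theorem charpoly_leftMulMatrix_root {ι : Type*} [Fintype ι] [DecidableEq ι] (hp : p.Monic)
    (b : Basis ι K (AdjoinRoot p)) : (Algebra.leftMulMatrix b (root p)).charpoly = p := by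
  have := hp.free_adjoinRoot
  have := hp.finite_adjoinRoot
  rw [Algebra.leftMulMatrix_apply, LinearMap.charpoly_toMatrix,
    ← LinearMap.charpoly_toMatrix _ (powerBasis hp.ne_zero).basis, ← Algebra.leftMulMatrix_apply,
    ← powerBasis_gen hp.ne_zero, charpoly_leftMulMatrix, minpoly_powerBasis_gen_of_monic hp]

noncomputable def newtonBasis (hp : p.Monic) (hn : p.natDegree = n) (d : ℕ → K) :
    Basis (Fin n) K (AdjoinRoot p) :=
  basisOfTopLeSpanOfCardEqFinrank _ (span_mk_nodal_range hp hn d).ge <| by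
    rw [Fintype.card_fin, (powerBasis' hp).finrank, powerBasis'_dim, hn]

theorem newtonBasis_apply (hp : p.Monic) (hn : p.natDegree = n) (d : ℕ → K) (j : Fin n) :
    newtonBasis hp hn d j = mk p (nodal (Finset.range j) d) :=
  congrFun (coe_basisOfTopLeSpanOfCardEqFinrank _ _ _) j

theorem root_mul_newtonBasis (hp : p.Monic) (hn : p.natDegree = n) (d : ℕ → K) (j : Fin n)
    (hj : (j : ℕ) + 1 < n) :
    root p * newtonBasis hp hn d j =
      newtonBasis hp hn d ⟨j + 1, hj⟩ + d j • newtonBasis hp hn d j := by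
  simp only [newtonBasis_apply, nodal_range_succ, map_mul, map_sub, mk_X, mk_C, Algebra.smul_def,
    algebraMap_eq]
  ring

theorem leftMulMatrix_newtonBasis_root_apply_self (hp : p.Monic) (hn : p.natDegree = n)
    (d : ℕ → K) (j : Fin n) (hj : (j : ℕ) + 1 < n) :
    Algebra.leftMulMatrix (newtonBasis hp hn d) (root p) j j = d j := by
  rw [Algebra.leftMulMatrix_eq_repr_mul, root_mul_newtonBasis hp hn d j hj]
  simp [Fin.ext_iff]

end AdjoinRoot

open AdjoinRoot in
theorem Matrix.exists_diag_eq_and_charpoly_eq {K : Type*} [Field K] {n : ℕ} {p : K[X]}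
    (hp : p.Monic) (hn : p.natDegree = n) (d : Fin n → K) (hd : ∑ i, d i = -p.nextCoeff) :
    ∃ A : Matrix (Fin n) (Fin n) K, (∀ i, A i i = d i) ∧ A.charpoly = p := by
  let d' : ℕ → K := fun k => if h : k < n then d ⟨k, h⟩ else 0
  let A := Algebra.leftMulMatrix (newtonBasis hp hn d') (root p)
  have hchar : A.charpoly = p := charpoly_leftMulMatrix_root hp _
  have hdiag : ∀ i : Fin n, (i : ℕ) + 1 < n → A i i = d i := fun i hi =>
    (leftMulMatrix_newtonBasis_root_apply_self hp hn d' i hi).trans (dif_pos i.isLt)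
  refine ⟨A, fun i => ?_, hchar⟩
  by_cases hi : (i : ℕ) + 1 < n
  · exact hdiag i hi
  · have htrace : ∑ j, A j j = ∑ j, d j := by
      rw [hd, ← hchar, ← Matrix.trace_eq_neg_charpoly_nextCoeff, Matrix.trace]
      rfl
    refine Fintype.apply_eq_of_sum_eq_of_forall_ne htrace i fun j hj => hdiag j ?_
    have : (j : ℕ) ≠ i := Fin.val_ne_of_ne hj
    omega

theorem stmt8 (n : ℕ) (l d : Fin n → ℂ) (h : ∑ i, l i = ∑ i, d i) :
    ∃ A : Matrix (Fin n) (Fin n) ℂ,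
      (∀ i, A i i = d i) ∧ A.charpoly = ∏ i, (X - C (l i)) :=
  Matrix.exists_diag_eq_and_charpoly_eq (monic_prod_of_monic _ _ fun i _ => monic_X_sub_C (l i))
    (by rw [natDegree_finsetProd_X_sub_C_eq_card, Finset.card_univ, Fintype.card_fin]) d
    (by rw [prod_X_sub_C_nextCoeff, neg_neg, h])
end
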